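/- Let μ be a probability measure on ℝ supported on [0,1] that is invariant under the map x ↦ 1 − x and satisfies μ({1/2}) = 0, and let ν be the conditional measure of μ on [1/2,1], i.e. ν(A) = 2·μ(A ∩ [1/2,1]), with mean θ̄ = ∫ θ dν(θ). Let X_1,…,X_N be vectors in a real vector space V with centroid X̄ = (1/N)Σ_i X_i, let p_1,…,p_N be vectors in a real vector space W with centroid p̄ = (1/N)Σ_i p_i, and let ℓ : V × W → ℝ be a function such that λ ↦ ℓ(λX_i+(1−λ)X_j, λp_i+(1−λ)p_j) is μ-integrable for all i, j. Define X̃_i = θ̄(X_i − X̄) + X̄, p̃_i = θ̄(p_i − p̄) + p̄, δ_{ij}(θ) = (θ−θ̄)X_i + (1−θ)X_j − (1−θ̄)X̄, and ε_{ij}(θ) = (θ−θ̄)p_i + (1−θ)p_j − (1−θ̄)p̄. Then the mixup empirical risk satisfies (1/N²) Σ_{i=1}^{N} Σ_{j=1}^{N} ∫ ℓ(λX_i+(1−λ)X_j, λp_i+(1−λ)p_j) dμ(λ) = (1/N) Σ_{i=1}^{N} (1/N) Σ_{j=1}^{N} ∫ ℓ(X̃_i + δ_{ij}(θ), p̃_i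 + ε_{ij}(θ)) dν(θ). -/
import Mathlib


open MeasureTheory ENNReal

/-- **Theorem 1 (mixup as label smoothing).** For a symmetric mixing distribution `μ` on `[0,1]`
with no atom at `1/2`, the mixup empirical risk equals the risk evaluated at the squeezed points
plus zero-mean perturbations, with the mixing coefficient drawn from the conditional measure `ν`
of `μ` on `[1/2,1]`. -/
theorem mixup_empirical_risk_eq
    {V W : Type*} [AddCommGroup V] [Module ℝ V] [AddCommGroup W] [Module ℝ W]
    (μ : Measure ℝ) [IsProbabilityMeasure μ]
    (hsupp : μ (Set.Icc (0:ℝ) 1)ᶜ = 0)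
    (hinv : Measure.map (fun x : ℝ => 1 - x) μ = μ)
    (hatom : μ {(1:ℝ)/2} = 0)
    (N : ℕ) (hN : 0 < N)
    (X : Fin N → V) (p : Fin N → W) (ℓ : V → W → ℝ)
    (hint : ∀ i j : Fin N,
      Integrable (fun lam : ℝ =>
        ℓ (lam • X i + (1 - lam) • X j) (lam • p i + (1 - lam) • p j)) μ) :
    -- the conditional measure of μ on [1/2, 1]:  ν(A) = 2 · μ(A ∩ [1/2,1])
    let ν : Measure ℝ := (2 : ℝ≥0∞) • μ.restrict (Set.Icc ((1:ℝ)/2) 1)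
    -- its mean
    let θbar : ℝ := ∫ θ, θ ∂ν
    -- centroids
    let Xbar : V := (N : ℝ)⁻¹ • ∑ i, X i
    let pbar : W := (N : ℝ)⁻¹ • ∑ i, p i
    -- squeezed points
    let Xt : Fin N → V := fun i => θbar • (X i - Xbar) + Xbar
    let pt : Fin N → W := fun i => θbar • (p i - pbar) + pbar
    -- perturbations
    let δ : Fin N → Fin N → ℝ → V := fun i j θ =>
      (θ - θbar) • X i + (1 - θ) • X j - (1 - θbar) • Xbar
    let ε : Fin N → Fin N → ℝ → W := fun i j θ =>
      (θ - θbar) • p i + (1 - θ) • p j - (1 - θbar) • pbar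
    ((N : ℝ) ^ 2)⁻¹ * ∑ i, ∑ j,
        ∫ lam, ℓ (lam • X i + (1 - lam) • X j) (lam • p i + (1 - lam) • p j) ∂μ
      = (N : ℝ)⁻¹ * ∑ i, (N : ℝ)⁻¹ * ∑ j,
          ∫ θ, ℓ (Xt i + δ i j θ) (pt i + ε i j θ) ∂ν := by

  intro ν θbar Xbar pbar Xt pt δ ε
  set S : Set ℝ := Set.Icc ((1:ℝ)/2) 1 with hSdef
  set σ : ℝ → ℝ := fun x => 1 - x with hσdef
  set f : Fin N → Fin N → ℝ → ℝ := fun i j lam =>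
    ℓ (lam • X i + (1 - lam) • X j) (lam • p i + (1 - lam) • p j) with hfdef
  have hmeasS : MeasurableSet S := measurableSet_Icc
  have hσmeas : Measurable σ := (measurable_const.sub measurable_id)
  -- integrand on RHS simplifies
  have hXt : ∀ (i j : Fin N) (θ : ℝ), Xt i + δ i j θ = θ • X i + (1 - θ) • X j := by
    intro i j θ
    show θbar • (X i - Xbar) + Xbar + ((θ - θbar) • X i + (1 - θ) • X j - (1 - θbar) • Xbar)
        = θ • X i + (1 - θ) • X j
    module
  have hpt : ∀ (i j : Fin N) (θ : ℝ), pt i + ε i j θ = θ • p i + (1 - θ) • p j := by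
    intro i j θ
    show θbar • (p i - pbar) + pbar + ((θ - θbar) • p i + (1 - θ) • p j - (1 - θbar) • pbar)
        = θ • p i + (1 - θ) • p j
    module
  have hRHSint : ∀ i j : Fin N, (∫ θ, ℓ (Xt i + δ i j θ) (pt i + ε i j θ) ∂ν)
      = 2 * ∫ lam in S, f i j lam ∂μ := by
    intro i j
    have h1 : (fun θ => ℓ (Xt i + δ i j θ) (pt i + ε i j θ)) = f i j := by
      funext θ; rw [hXt, hpt]
    show (∫ θ, ℓ (Xt i + δ i j θ) (pt i + ε i j θ) ∂((2 : ℝ≥0∞) • μ.restrict S))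
        = 2 * ∫ lam in S, f i j lam ∂μ
    rw [integral_smul_measure, h1]
    norm_num
  -- the symmetry step
  have hpre : ∀ i j : Fin N, (fun lam => f i j (σ lam)) = f j i := by
    intro i j
    funext lam
    show ℓ ((1 - lam) • X i + (1 - (1 - lam)) • X j) ((1 - lam) • p i + (1 - (1 - lam)) • p j)
        = ℓ (lam • X j + (1 - lam) • X i) (lam • p j + (1 - lam) • p i)
    have : (1 : ℝ) - (1 - lam) = lam := by ring
    rw [this, add_comm ((1 - lam) • X i), add_comm ((1 - lam) • p i)]
  have hsetae : (σ ⁻¹' Sᶜ : Set ℝ) =ᵐ[μ] S := by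
    rw [Filter.eventuallyEq_set]
    have h1 : μ ((σ ⁻¹' Sᶜ) \ S) = 0 := by
      refine measure_mono_null ?_ hsupp
      intro x hx
      simp only [Set.mem_diff, Set.mem_preimage, Set.mem_compl_iff, hSdef, hσdef,
        Set.mem_Icc, not_and_or, not_le, Set.mem_compl_iff] at hx ⊢
      obtain ⟨h1, h2⟩ := hx
      rcases h2 with h2 | h2
      · rcases h1 with h1 | h1
        · exact absurd h2 (by linarith)
        · left; linarith
      · right; exact h2
    have h2 : μ (S \ (σ ⁻¹' Sᶜ)) = 0 := by
      refine measure_mono_null ?_ hatom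
      intro x hx
      simp only [Set.mem_diff, Set.mem_preimage, Set.mem_compl_iff, hSdef, hσdef,
        Set.mem_Icc, not_and_or, not_le, not_or, not_lt] at hx
      have : x = 1/2 := by
        obtain ⟨⟨ha, hb⟩, hc, hd⟩ := hx
        linarith
      simp [this]
    have := measure_union_null h1 h2
    filter_upwards [measure_eq_zero_iff_ae_notMem.mp this] with x hx
    simp only [Set.mem_union, Set.mem_diff, not_or, not_and, not_not] at hx
    constructor
    · intro h; exact hx.1 h
    · intro h; exact hx.2 h
  have hsym : ∀ i j : Fin N, (∫ lam, f i j lam ∂μ)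
      = (∫ lam in S, f i j lam ∂μ) + ∫ lam in S, f j i lam ∂μ := by
    intro i j
    have hadd := integral_add_compl hmeasS (hint i j)
    have hcompl : (∫ lam in Sᶜ, f i j lam ∂μ) = ∫ lam in S, f j i lam ∂μ := by
      have haesm : AEStronglyMeasurable (f i j) (Measure.map σ μ) := by
        rw [hinv]; exact (hint i j).aestronglyMeasurable
      calc (∫ lam in Sᶜ, f i j lam ∂μ)
          = ∫ lam in Sᶜ, f i j lam ∂(Measure.map σ μ) := by rw [hinv]
        _ = ∫ lam in σ ⁻¹' Sᶜ, f i j (σ lam) ∂μ :=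
            setIntegral_map hmeasS.compl haesm hσmeas.aemeasurable
        _ = ∫ lam in σ ⁻¹' Sᶜ, f j i lam ∂μ := by rw [hpre i j]
        _ = ∫ lam in S, f j i lam ∂μ := setIntegral_congr_set hsetae
    rw [← hadd, hcompl]
  -- assemble
  have hsum : (∑ i, ∑ j, ∫ lam, f i j lam ∂μ)
      = ∑ i, ∑ j, (2 * ∫ lam in S, f i j lam ∂μ) := by
    calc (∑ i, ∑ j, ∫ lam, f i j lam ∂μ)
        = ∑ i, ∑ j, ((∫ lam in S, f i j lam ∂μ) + ∫ lam in S, f j i lam ∂μ) := by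
          simp only [hsym]
      _ = (∑ i, ∑ j, ∫ lam in S, f i j lam ∂μ)
            + ∑ i : Fin N, ∑ j : Fin N, ∫ lam in S, f j i lam ∂μ := by
          rw [← Finset.sum_add_distrib]
          exact Finset.sum_congr rfl fun i _ => by rw [← Finset.sum_add_distrib]
      _ = (∑ i, ∑ j, ∫ lam in S, f i j lam ∂μ)
            + ∑ j : Fin N, ∑ i : Fin N, ∫ lam in S, f j i lam ∂μ := by
          rw [Finset.sum_comm]
      _ = ∑ i, ∑ j, (2 * ∫ lam in S, f i j lam ∂μ) := by
          rw [← Finset.sum_add_distrib]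
          refine Finset.sum_congr rfl fun i _ => ?_
          rw [← Finset.sum_add_distrib]
          exact Finset.sum_congr rfl fun j _ => by ring
  show ((N : ℝ) ^ 2)⁻¹ * ∑ i, ∑ j, ∫ lam, f i j lam ∂μ
      = (N : ℝ)⁻¹ * ∑ i, (N : ℝ)⁻¹ * ∑ j, ∫ θ, ℓ (Xt i + δ i j θ) (pt i + ε i j θ) ∂ν
  rw [hsum]
  simp only [hRHSint]
  rw [sq, mul_inv, mul_assoc, Finset.mul_sum]
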